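/- arXiv:1510.00845 — 3 statements merged into one kernel-verified Lean document; each statement's English description precedes it below -/
import Mathlib

section
/- For every integer n ≥ 1 and every y ∈ ℤ^d with y_i = −1, one has P(τ = n and S_n = y) = (1/n) · P(S_n = y). -/
/-!
Cycle lemma (Takács). Write `n` steps with `i`-th coordinates `≥ -1` summing to `-1`; among
the `n` cyclic rotations of the step sequence exactly one has its `i`-th partial sums avoid `-1`
before time `n`, namely the rotation starting at the first time the partial sums attain their
minimum. Since i.i.d. steps are exchangeable, every rotation has the same law, so
`P(Sₙ = y)` is `n` times the probability that the unrotated walk first hits `-1` at time `n`.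
-/

open MeasureTheory ProbabilityTheory Finset
open Fin.NatCast
open scoped ENNReal

theorem forall_ne_neg_one_iff_forall_nonneg {G : ℕ → ℤ} (h0 : G 0 = 0)
    (hstep : ∀ m, G m - 1 ≤ G (m + 1)) (N : ℕ) :
    (∀ m < N, G m ≠ -1) ↔ ∀ m < N, 0 ≤ G m := by
  refine ⟨fun h m hm => ?_, fun h m hm => by have := h m hm; omega⟩
  induction m with
  | zero => exact h0.ge
  | succ m ih =>
    have := ih (by omega)
    have := hstep m
    have := h (m + 1) hm
    omega

theorem existsUnique_forall_le_add {n : ℕ} [NeZero n] {F : ℕ → ℤ}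
    (hF : ∀ m, F (n + m) = F m - 1) :
    ∃! r : Fin n, ∀ m < n, F r ≤ F (r + m) := by
  -- the first time at which `F` attains its minimum over `[0, n)`
  obtain ⟨r, -, hr⟩ :=
    exists_min_image univ (fun s : Fin n => toLex (F s, (s : ℕ))) univ_nonempty
  have hmin (s : ℕ) (hs : s < n) : F r < F s ∨ F r = F s ∧ (r : ℕ) ≤ s :=
    Prod.Lex.toLex_le_toLex.mp (hr ⟨s, hs⟩ (mem_univ _))
  have hgood : ∀ m < n, F r ≤ F (r + m) := by
    intro m hm
    rcases lt_or_ge ((r : ℕ) + m) n with h | h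
    · have := hmin (r + m) h
      omega
    · have := hmin (r + m - n) (by omega)
      have hwrap := hF (r + m - n)
      rw [show n + (r + m - n) = r + m by omega] at hwrap
      omega
  have not_lt_of_good (s t : Fin n) (hs : ∀ m < n, F s ≤ F (s + m))
      (ht : ∀ m < n, F t ≤ F (t + m)) : ¬ (s : ℕ) < t := by
    intro hst
    have h1 := hs (t - s) (by omega)
    have h2 := ht (s + n - t) (by omega)
    rw [show (s : ℕ) + (t - s) = t by omega] at h1
    rw [show (t : ℕ) + (s + n - t) = n + s by omega, hF] at h2
    omega
  refine ⟨r, hgood, fun r' hr' => ?_⟩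
  have := not_lt_of_good r r' hgood hr'
  have := not_lt_of_good r' r hr' hgood
  omega

theorem existsUnique_rotation_forall_sum_ne {n : ℕ} [NeZero n] {a : Fin n → ℤ}
    (ha : ∀ m, -1 ≤ a m) (hsum : ∑ m, a m = -1) :
    ∃! r : Fin n, ∀ m < n, ∑ k ∈ range m, a (r + k) ≠ -1 := by
  set F : ℕ → ℤ := fun m => ∑ k ∈ range m, a k
  have hsum' : ∑ k ∈ range n, a k = -1 := by
    simpa only [← Fin.sum_univ_eq_sum_range, Fin.cast_val_eq_self] using hsum
  have hF (m : ℕ) : F (n + m) = F m - 1 := by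
    simp only [F, sum_range_add, Nat.cast_add, Fin.natCast_self, zero_add, hsum']
    ring
  refine (existsUnique_congr fun r => ?_).mpr (existsUnique_forall_le_add hF)
  have hrot (m : ℕ) : ∑ k ∈ range m, a (r + k) = F (r + m) - F r := by
    simp only [F, sum_range_add, Nat.cast_add, Fin.cast_val_eq_self]
    ring
  simp only [hrot]
  rw [forall_ne_neg_one_iff_forall_nonneg (by simp) (fun m => ?_)]
  · simp only [sub_nonneg]
  · rw [← hrot, ← hrot, sum_range_succ]
    linarith [ha (r + m)]

theorem measurePreserving_comp_perm {ι E : Type*} [Fintype ι] [MeasurableSpace E]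
    (μ : Measure E) [SigmaFinite μ] (e : Equiv.Perm ι) :
    MeasurePreserving (fun v : ι → E => v ∘ e) (Measure.pi fun _ => μ)
      (Measure.pi fun _ => μ) := by
  convert measurePreserving_piCongrLeft (fun _ => μ) e.symm using 1
  ext v i
  simp [MeasurableEquiv.piCongrLeft, Equiv.piCongrLeft]

theorem ENat.sInf_natCast_image_eq_natCast_iff {A : Set ℕ} {n : ℕ} :
    sInf (((↑) : ℕ → ℕ∞) '' A) = n ↔ IsLeast A n := by
  refine ⟨fun h => ?_, fun h => (Nat.strictMono_cast.map_isLeast.mpr h).csInf_eq⟩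
  obtain rfl | hA := A.eq_empty_or_nonempty
  · simp at h
  · rwa [((Nat.strictMono_cast (α := ℕ∞)).map_isLeast.mpr (isLeast_csInf hA)).csInf_eq,
      Nat.cast_inj, ← (isLeast_csInf hA).isLeast_iff_eq] at h

theorem ENat.sInf_natCast_image_eq_iff_forall_lt {p : ℕ → Prop} (h0 : ¬ p 0) {n : ℕ}
    (hn : 1 ≤ n) (hpn : p n) :
    sInf (((↑) : ℕ → ℕ∞) '' {m | 1 ≤ m ∧ p m}) = n ↔ ∀ m < n, ¬ p m := by
  rw [sInf_natCast_image_eq_natCast_iff]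
  refine ⟨fun hleast m hm hpm => ?_, fun h => ⟨⟨hn, hpn⟩, fun m hm => ?_⟩⟩
  · obtain rfl | hm0 := Nat.eq_zero_or_pos m
    · exact h0 hpm
    · exact absurd (hleast.2 ⟨hm0, hpm⟩) (by omega)
  · exact not_lt.mp fun hlt => h m hlt hm.2

theorem ProbabilityTheory.iIndepFun.map_fin_eq_pi {Ω E : Type*} [MeasurableSpace Ω]
    [MeasurableSpace E] {P : Measure Ω} [IsProbabilityMeasure P] {ξ : ℕ → Ω → E}
    (hmeas : ∀ n, Measurable (ξ n)) (hindep : iIndepFun ξ P) {μ : Measure E}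
    (hlaw : ∀ n, P.map (ξ n) = μ) (n : ℕ) :
    P.map (fun ω (m : Fin n) => ξ m ω) = Measure.pi fun _ => μ := by
  rw [(iIndepFun_iff_map_fun_eq_pi_map (f := fun m : Fin n => ξ m)
    fun m => (hmeas m).aemeasurable).mp (hindep.precomp Fin.val_injective)]
  simp only [hlaw]

theorem ae_neg_one_le_map_sub_single {d : ℕ} {ν : Measure (Fin d → ℤ)}
    (hν : ν {k | ¬ ∀ j, 0 ≤ k j} = 0) (i : Fin d) :
    ∀ᵐ w ∂ν.map (· - Pi.single i 1), -1 ≤ w i := by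
  refine (ae_map_iff Measurable.of_discrete.aemeasurable .of_discrete).mpr ?_
  filter_upwards [ae_iff.mpr hν] with k hk
  simp only [Pi.sub_apply, Pi.single_eq_same]
  linarith [hk i]

section FirstPassage

variable (n : ℕ) [NeZero n] {d : ℕ} (i : Fin d) (y : Fin d → ℤ)

def firstPassageSet : Set (Fin n → Fin d → ℤ) :=
  {v | ∑ m, v m = y ∧ ∀ m < n, (∑ k ∈ range m, v k) i ≠ -1}

variable {n i y}

theorem comp_addLeft_mem_firstPassageSet_iff {v : Fin n → Fin d → ℤ} {r : Fin n} :
    v ∘ Equiv.addLeft r ∈ firstPassageSet n i y ↔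
      ∑ m, v m = y ∧ ∀ m < n, ∑ k ∈ range m, v (r + k) i ≠ -1 := by
  have hrot : ∑ m, v (r + m) = ∑ m, v m := Equiv.sum_comp (Equiv.addLeft r) v
  simp [firstPassageSet, Finset.sum_apply, hrot]

theorem existsUnique_comp_addLeft_mem_firstPassageSet (hy : y i = -1)
    {v : Fin n → Fin d → ℤ} (hv : ∀ m, -1 ≤ v m i) (hsum : ∑ m, v m = y) :
    ∃! r : Fin n, v ∘ Equiv.addLeft r ∈ firstPassageSet n i y := by
  simp only [comp_addLeft_mem_firstPassageSet_iff, hsum, true_and]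
  refine existsUnique_rotation_forall_sum_ne hv ?_
  rw [← hy, ← hsum, Finset.sum_apply]

theorem measure_pi_sum_eq_mul_firstPassageSet (μ : Measure (Fin d → ℤ)) [SigmaFinite μ]
    (hμ : ∀ᵐ w ∂μ, -1 ≤ w i) (hy : y i = -1) :
    Measure.pi (fun _ : Fin n => μ) {v | ∑ m, v m = y} =
      n * Measure.pi (fun _ : Fin n => μ) (firstPassageSet n i y) := by
  set π := Measure.pi (fun _ : Fin n => μ)
  set G : Set (Fin n → Fin d → ℤ) := {v | ∀ m, -1 ≤ v m i}
  set A : Fin n → Set (Fin n → Fin d → ℤ) :=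
    fun r => (· ∘ Equiv.addLeft r) ⁻¹' firstPassageSet n i y ∩ G
  have hG : π Gᶜ = 0 := ae_iff.mp (Measure.ae_pi_le_pi (Filter.eventually_pi fun _ => hμ))
  have hcover : {v | ∑ m, v m = y} ∩ G = ⋃ r, A r := by
    ext v
    simp only [Set.mem_inter_iff, Set.mem_iUnion, A]
    constructor
    · rintro ⟨hsum, hv⟩
      obtain ⟨r, hr, -⟩ := existsUnique_comp_addLeft_mem_firstPassageSet hy hv hsum
      exact ⟨r, hr, hv⟩
    · rintro ⟨r, hr, hv⟩
      exact ⟨(comp_addLeft_mem_firstPassageSet_iff.mp hr).1, hv⟩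
  have hdisj : Pairwise (Function.onFun Disjoint A) := by
    refine fun r s hrs => Set.disjoint_left.mpr fun v ⟨hr, hv⟩ ⟨hs, _⟩ => hrs ?_
    exact (existsUnique_comp_addLeft_mem_firstPassageSet hy hv
      (comp_addLeft_mem_firstPassageSet_iff.mp hr).1).unique hr hs
  calc π {v | ∑ m, v m = y}
      = π ({v | ∑ m, v m = y} ∩ G) := (measure_inter_conull hG).symm
    _ = ∑ r, π (A r) := by
      rw [hcover, measure_iUnion hdisj fun _ => .of_discrete, tsum_fintype]
    _ = ∑ r : Fin n, π (firstPassageSet n i y) := by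
      refine sum_congr rfl fun r _ => ?_
      rw [measure_inter_conull hG]
      exact (measurePreserving_comp_perm μ _).measure_preimage
        MeasurableSet.of_discrete.nullMeasurableSet
    _ = n * π (firstPassageSet n i y) := by simp

end FirstPassage

theorem stmt0_general
    {d : ℕ} (i : Fin d)
    {Ω : Type*} [MeasurableSpace Ω] (P : Measure Ω) [IsProbabilityMeasure P]
    (ν : Measure (Fin d → ℤ)) [IsProbabilityMeasure ν]
    (hν : ν {k | ¬ ∀ j, 0 ≤ k j} = 0)
    (ξ : ℕ → Ω → (Fin d → ℤ))
    (hmeas : ∀ n, Measurable (ξ n))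
    (hindep : iIndepFun ξ P)
    (hlaw : ∀ n, Measure.map (ξ n) P = Measure.map (fun k => k - Pi.single i 1) ν)
    (S : ℕ → Ω → (Fin d → ℤ))
    (hS : ∀ n ω, S n ω = ∑ m ∈ Finset.range n, ξ m ω)
    (τ : Ω → ℕ∞)
    (hτ : ∀ ω, τ ω = sInf ((↑) '' {m : ℕ | 1 ≤ m ∧ S m ω i = -1}))
    (n : ℕ) (hn : 1 ≤ n) (y : Fin d → ℤ) (hy : y i = -1) :
    P {ω | τ ω = (n : ℕ∞) ∧ S n ω = y} = (n : ℝ≥0∞)⁻¹ * P {ω | S n ω = y} := by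
  have : NeZero n := ⟨by omega⟩
  set μ := ν.map (fun k => k - Pi.single i 1)
  set X : Ω → Fin n → Fin d → ℤ := fun ω m => ξ m ω
  have hlawX (A : Set (Fin n → Fin d → ℤ)) : P (X ⁻¹' A) = Measure.pi (fun _ => μ) A := by
    rw [← hindep.map_fin_eq_pi hmeas hlaw n,
      Measure.map_apply (measurable_pi_lambda X fun m => hmeas m) .of_discrete]
  have hSX (ω : Ω) (m : ℕ) (hm : m ≤ n) : S m ω = ∑ k ∈ range m, X ω k := by
    rw [hS]
    refine sum_congr rfl fun k hk => ?_
    simp only [X, Fin.val_natCast, Nat.mod_eq_of_lt ((mem_range.mp hk).trans_le hm)]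
  have hSn (ω : Ω) : S n ω = ∑ m, X ω m := by
    rw [hS, ← Fin.sum_univ_eq_sum_range]
  have hB : {ω | S n ω = y} = X ⁻¹' {v | ∑ m, v m = y} := by
    ext ω; simp [hSn]
  have hA : {ω | τ ω = n ∧ S n ω = y} = X ⁻¹' firstPassageSet n i y := by
    ext ω
    simp only [Set.mem_ofPred_eq, Set.mem_preimage, firstPassageSet, ← hSn, hτ]
    rw [and_comm]
    refine and_congr_right fun hSny => ?_
    rw [ENat.sInf_natCast_image_eq_iff_forall_lt (by simp [hS]) hn (by rw [hSny, hy])]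
    exact forall₂_congr fun m hm => by rw [hSX ω m hm.le, Finset.sum_apply]
  rw [hA, hB, hlawX, hlawX,
    measure_pi_sum_eq_mul_firstPassageSet μ (ae_neg_one_le_map_sub_single hν i) hy,
    ← mul_assoc, ENNReal.inv_mul_cancel (by simp; omega) (by simp), one_mul]

/-- (Ballot-type identity, Tak\'acs.) For the random walk `S` with i.i.d. steps
of law `ν̃ᵢ` (the shift by `-eᵢ` of a progeny law `νᵢ` on `ℤ₊^d`), letting
`τ = inf {n ≥ 1 : (Sₙ)ᵢ = -1}`, for every `n ≥ 1` and every `y` with `yᵢ = -1` one has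
`P(τ = n, Sₙ = y) = (1/n) P(Sₙ = y)`. -/
theorem stmt0
    {d : ℕ} (hd : 1 ≤ d) (i : Fin d)
    {Ω : Type*} [MeasurableSpace Ω] (P : Measure Ω) [IsProbabilityMeasure P]
    (ν : Measure (Fin d → ℤ)) [IsProbabilityMeasure ν]
    (hν : ν {k | ¬ ∀ j, 0 ≤ k j} = 0)
    (ξ : ℕ → Ω → (Fin d → ℤ))
    (hmeas : ∀ n, Measurable (ξ n))
    (hindep : iIndepFun ξ P)
    (hlaw : ∀ n, Measure.map (ξ n) P = Measure.map (fun k => k - Pi.single i 1) ν)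
    (S : ℕ → Ω → (Fin d → ℤ))
    (hS : ∀ n ω, S n ω = ∑ m ∈ Finset.range n, ξ m ω)
    (τ : Ω → ℕ∞)
    (hτ : ∀ ω, τ ω = sInf ((↑) '' {m : ℕ | 1 ≤ m ∧ S m ω i = -1}))
    (n : ℕ) (hn : 1 ≤ n) (y : Fin d → ℤ) (hy : y i = -1) :
    P {ω | τ ω = (n : ℕ∞) ∧ S n ω = y} = (n : ℝ≥0∞)⁻¹ * P {ω | S n ω = y} :=
  stmt0_general i P ν hν ξ hmeas hindep hlaw S hS τ hτ n hn y hy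
end

section
/- For every k ∈ ℤ_+^d with k_i = 0, one has P(τ < ∞ and S_τ = k − e_i) = Σ_{n≥1} (1/n) · ν_i^{*n}(k + (n−1)e_i), where ν_i^{*n} denotes the n-fold convolution power of ν_i. In other words, the law of the stopped walk S_τ on {τ < ∞} is the measure μ_i on {k ∈ ℤ_+^d : k_i = 0} (shifted by −e_i) defined by μ_i(k) = Σ_{n≥1} n^{−1} ν_i^{*n}(k + (n−1)e_i). -/
open MeasureTheory ProbabilityTheory Filter
open scoped ENNReal NNReal
open Fin.NatCast

/-- `n`-fold convolution power of a measure on `ℤ^d`: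
`convPow ν 0 = δ₀` and `convPow ν (n+1) = (convPow ν n) ∗ ν`. -/
noncomputable def convPow {d : ℕ} (ν : Measure (Fin d → ℤ)) : ℕ → Measure (Fin d → ℤ)
  | 0 => Measure.dirac 0
  | n + 1 =>
      Measure.map (fun p : (Fin d → ℤ) × (Fin d → ℤ) => p.1 + p.2) ((convPow ν n).prod ν)

section Aux

lemma measurableSet_all {α : Type*} [MeasurableSpace α] [Countable α]
    [MeasurableSingletonClass α] (s : Set α) : MeasurableSet s :=
  s.to_countable.measurableSet

lemma measurable_all {α β : Type*} [MeasurableSpace α] [Countable α]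
    [MeasurableSingletonClass α] [MeasurableSpace β] (f : α → β) : Measurable f :=
  fun _ _ => measurableSet_all _


/-- Cycle lemma: for an `N`-periodic integer step sequence with steps `≥ -1`
and total sum `-1` over one period, there is a unique rotation index `j < N`
such that all proper partial sums of the rotated sequence avoid `-1`. -/
lemma cycle_lemma (N : ℕ) (hN : 0 < N) (y : ℕ → ℤ)
    (hper : ∀ m, y (m + N) = y m) (hstep : ∀ m, -1 ≤ y m)
    (hsum : (∑ l ∈ Finset.range N, y l) = -1) :
    ∃! j, j < N ∧ ∀ m, 1 ≤ m → m < N →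
      (∑ l ∈ Finset.range m, y (j + l)) ≠ -1 := by
  classical
  set F : ℕ → ℤ := fun m => ∑ l ∈ Finset.range m, y l with hF
  have hshift : ∀ m, (∑ l ∈ Finset.range N, y (m + l)) = -1 := by
    intro m
    induction m with
    | zero => simpa using hsum
    | succ m ih =>
      obtain ⟨M, rfl⟩ := Nat.exists_eq_succ_of_ne_zero hN.ne'
      rw [Finset.sum_range_succ]
      rw [Finset.sum_range_succ'] at ih
      have e1 : ∀ l, y (m + 1 + l) = y (m + (l + 1)) := fun l => by
        congr 1; ring
      have e2 : y (m + 1 + M) = y m := by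
        have h : m + 1 + M = m + (M + 1) := by ring
        rw [h, hper]
      rw [e2, Finset.sum_congr rfl fun l _ => e1 l]
      simpa using ih
  have hFadd : ∀ j m, F (j + m) = F j + ∑ l ∈ Finset.range m, y (j + l) := by
    intro j m; simpa [hF] using Finset.sum_range_add y j m
  have hFper : ∀ m, F (m + N) = F m - 1 := by
    intro m; rw [hFadd m N, hshift]; ring
  have hFstep : ∀ m, F m - 1 ≤ F (m + 1) := by
    intro m
    have : F (m + 1) = F m + y m := by simp [hF, Finset.sum_range_succ]
    have := hstep m; omega
  -- reformulate goodness
  set G : ℕ → Prop := fun j => ∀ l, j < l → l < j + N → F j ≤ F l with hG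
  have hGiff : ∀ j, (∀ m, 1 ≤ m → m < N → (∑ l ∈ Finset.range m, y (j + l)) ≠ -1) ↔ G j := by
    intro j
    constructor
    · intro h l hjl hlN
      by_contra hlt
      push_neg at hlt
      -- take least bad l
      have hex : ∃ l, j < l ∧ l < j + N ∧ F l < F j := ⟨l, hjl, hlN, hlt⟩
      obtain ⟨h1, h2, h3⟩ := Nat.find_spec hex
      obtain ⟨l1, hl1⟩ : ∃ l1, Nat.find hex = l1 + 1 := ⟨Nat.find hex - 1, by omega⟩
      rw [hl1] at h1 h2 h3
      have hl1b : F j ≤ F l1 := by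
        rcases Nat.lt_or_ge j l1 with hlt' | hge
        · have hmin := Nat.find_min hex (m := l1) (by omega)
          push_neg at hmin
          have := hmin hlt' (by omega)
          omega
        · have hje : j = l1 := by omega
          exact hje ▸ le_rfl
      have hFl : F (l1 + 1) = F j - 1 := by have := hFstep l1; omega
      have hm : (∑ l ∈ Finset.range (l1 + 1 - j), y (j + l)) = -1 := by
        have hadd := hFadd j (l1 + 1 - j)
        rw [show j + (l1 + 1 - j) = l1 + 1 by omega] at hadd
        omega
      exact h (l1 + 1 - j) (by omega) (by omega) hm
    · intro h m h1 h2 habs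
      have := hFadd j m
      have : F (j + m) = F j - 1 := by omega
      have := h (j + m) (by omega) (by omega)
      omega
  -- min argument
  have hexmin : ∃ j, j < N ∧ ∀ m, m < N → F j ≤ F m := by
    obtain ⟨j, hj, hmin⟩ := Finset.exists_min_image (Finset.range N) F ⟨0, by simpa using hN⟩
    exact ⟨j, Finset.mem_range.mp hj, fun m hm => hmin m (Finset.mem_range.mpr hm)⟩
  set j₀ := Nat.find hexmin with hj₀
  obtain ⟨hj₀N, hj₀min⟩ := Nat.find_spec hexmin
  have hmin_lt : ∀ m, m < j₀ → F j₀ < F m := by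
    intro m hm
    rcases lt_or_ge (F j₀) (F m) with h | h
    · exact h
    · exfalso
      have : m < N ∧ ∀ o, o < N → F m ≤ F o :=
        ⟨by omega, fun o ho => le_trans h (hj₀min o ho)⟩
      exact absurd this (Nat.find_min hexmin hm)
  have hGj₀ : G j₀ := by
    intro l h1 h2
    rcases lt_or_ge l N with h | h
    · exact hj₀min l h
    · have hm : l - N < j₀ := by omega
      have : F l = F (l - N) - 1 := by
        have := hFper (l - N); rw [show l - N + N = l by omega] at this; omega
      have := hmin_lt (l - N) hm
      omega
  refine ⟨j₀, ⟨hj₀N, (hGiff j₀).mpr hGj₀⟩, ?_⟩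
  rintro j ⟨hjN, hj⟩
  have hGj : G j := (hGiff j).mp hj
  rcases lt_trichotomy j j₀ with h | h | h
  · exfalso
    have h1 : F j ≤ F j₀ := hGj j₀ h (by omega)
    have h2 : F j₀ < F j := hmin_lt j h
    omega
  · exact h
  · exfalso
    have h1 : F j ≤ F (j₀ + N) := hGj (j₀ + N) (by omega) (by omega)
    have h2 : F (j₀ + N) = F j₀ - 1 := hFper j₀
    have h3 : F j₀ ≤ F j := hj₀min j hjN
    omega

/-- pi of mapped measures -/
lemma pi_map_comp {d N : ℕ} (ν : Measure (Fin d → ℤ)) [IsProbabilityMeasure ν]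
    (g : (Fin d → ℤ) → (Fin d → ℤ)) :
    Measure.pi (fun _ : Fin N => ν.map g)
      = (Measure.pi fun _ : Fin N => ν).map (fun x m => g (x m)) := by
  have hg : Measurable g := measurable_all g
  haveI : IsProbabilityMeasure (ν.map g) := Measure.isProbabilityMeasure_map hg.aemeasurable
  refine Measure.pi_eq fun s hs => ?_
  rw [Measure.map_apply (measurable_all _) (measurableSet_all _)]
  have : (fun x (m : Fin N) => g (x m)) ⁻¹' Set.pi Set.univ s
      = Set.pi Set.univ (fun m => g ⁻¹' s m) := by
    ext x; simp [Set.mem_pi]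
  rw [this, Measure.pi_pi]
  exact Finset.prod_congr rfl fun m _ => (Measure.map_apply hg (hs m)).symm

lemma convPow_eq_map_sum {d : ℕ} (ν : Measure (Fin d → ℤ)) [IsProbabilityMeasure ν] (N : ℕ) :
    convPow ν N = (Measure.pi fun _ : Fin N => ν).map (fun x => ∑ m : Fin N, x m) := by
  induction N with
  | zero =>
    have : (fun x : Fin 0 → (Fin d → ℤ) => ∑ m : Fin 0, x m) = fun _ => (0 : Fin d → ℤ) := by
      funext x; simp
    rw [convPow, this, Measure.map_const]
    simp
  | succ N ih =>
    have hswap : ((Measure.pi fun _ : Fin N => ν).prod ν).map Prod.swap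
        = ν.prod (Measure.pi fun _ : Fin N => ν) := Measure.prod_swap
    have hsucc := measurePreserving_piFinSuccAbove (fun _ : Fin (N+1) => ν) (0 : Fin (N+1))
    -- convPow (N+1) = map add ((map sum pi).prod ν)
    rw [convPow, ih]
    have hpm := Measure.map_prod_map (Measure.pi fun _ : Fin N => ν) ν
      (measurable_all (fun x : Fin N → (Fin d → ℤ) => ∑ m, x m)) (measurable_id (α := Fin d → ℤ))
    rw [Measure.map_id] at hpm
    rw [hpm, Measure.map_map (measurable_all _) (measurable_all _)]
    -- now : map (fun p => (∑ m, p.1 m) + p.2) (pi.prod ν)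
    have := hsucc.map_eq
    -- pi (N+1) = map (piFinSuccAbove).symm (ν.prod pi N)
    have hpi : (Measure.pi fun _ : Fin (N+1) => ν)
        = (ν.prod (Measure.pi fun _ : Fin N => ν)).map
            (MeasurableEquiv.piFinSuccAbove (fun _ => Fin d → ℤ) 0).symm := by
      rw [← this, MeasurableEquiv.map_symm_map]
    rw [hpi, Measure.map_map (measurable_all _) (measurable_all _)]
    rw [← hswap, Measure.map_map (measurable_all _) (measurable_all _)]
    congr 1
    funext p
    obtain ⟨x, a⟩ := p
    simp only [Function.comp_apply, Prod.swap_prod_mk, Prod.map_apply, id_eq]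
    simp only [MeasurableEquiv.piFinSuccAbove_symm_apply]
    rw [Fin.sum_univ_succAbove _ (0 : Fin (N+1))]
    simp [Fin.insertNthEquiv, add_comm]

lemma joint_law {d : ℕ} {Ω : Type*} [MeasurableSpace Ω] (P : Measure Ω) [IsProbabilityMeasure P]
    (ξ : ℕ → Ω → (Fin d → ℤ)) (hmeas : ∀ n, Measurable (ξ n))
    (hindep : iIndepFun ξ P)
    (μ0 : Measure (Fin d → ℤ)) [IsProbabilityMeasure μ0]
    (hlaw : ∀ n, Measure.map (ξ n) P = μ0) (N : ℕ) :
    Measure.map (fun ω (m : Fin N) => ξ m ω) P = Measure.pi (fun _ : Fin N => μ0) := by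
  classical
  refine (Measure.pi_eq fun s hs => ?_).symm
  have hX : Measurable (fun ω (m : Fin N) => ξ m ω) := measurable_pi_lambda _ fun m => hmeas m
  rw [Measure.map_apply hX (measurableSet_all _)]
  set sets : ℕ → Set (Fin d → ℤ) := fun m => if h : m < N then s ⟨m, h⟩ else Set.univ with hsets
  have hpre : (fun ω (m : Fin N) => ξ m ω) ⁻¹' Set.pi Set.univ s
      = ⋂ m ∈ Finset.range N, ξ m ⁻¹' sets m := by
    ext ω
    simp only [Set.mem_preimage, Set.mem_pi, Set.mem_univ, forall_true_left, Set.mem_iInter,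
      Finset.mem_range]
    constructor
    · intro h m hm
      simp only [hsets, Set.mem_preimage, hm, dif_pos]
      exact h ⟨m, hm⟩
    · intro h m
      have := h m.1 m.2
      simpa [hsets, m.2] using this
  rw [hpre, hindep.measure_inter_preimage_eq_mul (Finset.range N)
    (fun m _ => measurableSet_all _)]
  rw [← Fin.prod_univ_eq_prod_range (fun m => P (ξ m ⁻¹' sets m)) N]
  refine Finset.prod_congr rfl fun m _ => ?_
  rw [← Measure.map_apply (hmeas m.1) (measurableSet_all _), hlaw m.1]
  congr 1
  simp [hsets, m.2]


lemma rot_preserving {E : Type*} [MeasurableSpace E] (μ : Measure E) [SigmaFinite μ] {N : ℕ}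
    (e : Fin N ≃ Fin N) :
    Measure.map (fun x : Fin N → E => fun m => x (e m)) (Measure.pi fun _ : Fin N => μ)
      = Measure.pi fun _ : Fin N => μ := by
  have h := measurePreserving_piCongrLeft (fun _ : Fin N => μ) e.symm
  have hcoe : ⇑(MeasurableEquiv.piCongrLeft (fun _ : Fin N => E) e.symm)
      = fun x : Fin N → E => fun m => x (e m) := by
    funext x
    simp [MeasurableEquiv.piCongrLeft, Equiv.piCongrLeft, Equiv.piCongrLeft']
  have := h.map_eq
  rwa [hcoe] at this

lemma pi_eval {E : Type*} [MeasurableSpace E] (μ : Measure E) [IsProbabilityMeasure μ] {N : ℕ}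
    (m : Fin N) (t : Set E) :
    (Measure.pi fun _ : Fin N => μ) ((fun x => x m) ⁻¹' t) = μ t := by
  classical
  have hset : (fun x : Fin N → E => x m) ⁻¹' t
      = Set.pi Set.univ (Function.update (fun _ : Fin N => Set.univ) m t) := by
    ext x
    simp only [Set.mem_preimage, Set.mem_pi, Set.mem_univ, forall_true_left,
      Function.update_apply]
    constructor
    · intro h j; split <;> simp_all
    · intro h; have := h m; simp_all
  rw [hset, Measure.pi_pi]
  have : ∀ j, μ (Function.update (fun _ : Fin N => Set.univ) m t j)
      = Function.update (fun _ : Fin N => (1 : ℝ≥0∞)) m (μ t) j := by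
    intro j
    by_cases h : j = m <;> simp [h, Function.update_apply, measure_univ]
  rw [Finset.prod_congr rfl fun j _ => this j]
  simp [Finset.prod_update_of_mem]


/-- The measure-level cycle lemma. -/
lemma measure_first_hit {d : ℕ} (i : Fin d) (μ : Measure (Fin d → ℤ)) [IsProbabilityMeasure μ]
    (hbad : μ {z | z i < -1} = 0) (N : ℕ) [NeZero N] (t : Fin d → ℤ) (hti : t i = -1) :
    (N : ℝ≥0∞) * (Measure.pi fun _ : Fin N => μ)
        {x | (∀ m, 1 ≤ m → m < N → (∑ l ∈ Finset.range m, x (l : Fin N)) i ≠ -1) ∧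
             (∑ l ∈ Finset.range N, x (l : Fin N)) = t}
      = (Measure.pi fun _ : Fin N => μ) {x | (∑ l ∈ Finset.range N, x (l : Fin N)) = t} := by
  classical
  have hN : 0 < N := Nat.pos_of_ne_zero (NeZero.ne N)
  set π := Measure.pi fun _ : Fin N => μ with hπ
  set A : Set (Fin N → Fin d → ℤ) :=
    {x | (∀ m, 1 ≤ m → m < N → (∑ l ∈ Finset.range m, x (l : Fin N)) i ≠ -1) ∧
         (∑ l ∈ Finset.range N, x (l : Fin N)) = t} with hA
  set B : Set (Fin N → Fin d → ℤ) := {x | (∑ l ∈ Finset.range N, x (l : Fin N)) = t} with hB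
  set V : Set (Fin N → Fin d → ℤ) := {x | ∀ m : Fin N, -1 ≤ x m i} with hV
  -- V has full measure
  have hzero : ∀ m : Fin N, π {x : Fin N → Fin d → ℤ | x m i < -1} = 0 := by
    intro m
    have h := pi_eval μ m {z : Fin d → ℤ | z i < -1}
    rw [hπ]
    rw [show {x : Fin N → Fin d → ℤ | x m i < -1}
        = (fun x : Fin N → Fin d → ℤ => x m) ⁻¹' {z | z i < -1} from rfl, h, hbad]
  have hVc : π Vᶜ = 0 := by
    have hsub : Vᶜ ⊆ ⋃ m : Fin N, {x : Fin N → Fin d → ℤ | x m i < -1} := by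
      intro x hx
      simp only [hV, Set.mem_compl_iff, Set.mem_setOf_eq, not_forall, not_le] at hx
      obtain ⟨m, hm⟩ := hx
      exact Set.mem_iUnion.mpr ⟨m, hm⟩
    refine le_antisymm (le_trans (measure_mono hsub) ?_) (zero_le)
    refine le_trans (measure_iUnion_le _) ?_
    simp [hzero]
  have hinter : ∀ C : Set (Fin N → Fin d → ℤ), π (C ∩ V) = π C := by
    intro C
    refine le_antisymm (measure_mono Set.inter_subset_left) ?_
    calc π C ≤ π ((C ∩ V) ∪ Vᶜ) := measure_mono (fun x hx => by
            by_cases hxV : x ∈ V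
            · exact Or.inl ⟨hx, hxV⟩
            · exact Or.inr hxV)
      _ ≤ π (C ∩ V) + π Vᶜ := measure_union_le _ _
      _ = π (C ∩ V) := by rw [hVc, add_zero]
  -- rotations
  set R : Fin N → (Fin N → Fin d → ℤ) → (Fin N → Fin d → ℤ) := fun j x m => x (m + j) with hR
  have hRpres : ∀ j : Fin N, ∀ C : Set (Fin N → Fin d → ℤ), π (R j ⁻¹' C) = π C := by
    intro j C
    have h := rot_preserving μ (Equiv.addRight j)
    have h2 : π (R j ⁻¹' C) = (Measure.map
        (fun x : Fin N → Fin d → ℤ => fun m => x ((Equiv.addRight j) m))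
        (Measure.pi fun _ : Fin N => μ)) C := by
      rw [Measure.map_apply (measurable_all _) (measurableSet_all _)]
      rfl
    rw [h2, h]
  -- sums of rotated sequences
  have hPSrot : ∀ (j : Fin N) (x : Fin N → Fin d → ℤ) (m : ℕ),
      (∑ l ∈ Finset.range m, (R j x) (l : Fin N))
        = ∑ l ∈ Finset.range m, x (((j : ℕ) + l : ℕ) : Fin N) := by
    intro j x m
    refine Finset.sum_congr rfl fun l _ => ?_
    show x ((l : Fin N) + j) = _
    rw [Nat.cast_add, Fin.cast_val_eq_self, add_comm]
  have hPSN : ∀ x : Fin N → Fin d → ℤ,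
      (∑ l ∈ Finset.range N, x (l : Fin N)) = ∑ m : Fin N, x m := by
    intro x
    rw [← Fin.sum_univ_eq_sum_range (fun l => x (l : Fin N)) N]
    exact Finset.sum_congr rfl fun m _ => by rw [Fin.cast_val_eq_self]
  have hPSrotN : ∀ (j : Fin N) (x : Fin N → Fin d → ℤ),
      (∑ l ∈ Finset.range N, (R j x) (l : Fin N)) = ∑ l ∈ Finset.range N, x (l : Fin N) := by
    intro j x
    rw [hPSN, hPSN]
    exact Fintype.sum_equiv (Equiv.addRight j) _ _ fun m => rfl
  -- goodness correspondence for x ∈ B ∩ V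
  have hgood : ∀ (x : Fin N → Fin d → ℤ), x ∈ B → x ∈ V → ∀ j : Fin N,
      (R j x ∈ A ∩ V ↔ ∀ m, 1 ≤ m → m < N →
        (∑ l ∈ Finset.range m, x ((((j : ℕ) + l : ℕ)) : Fin N) i) ≠ -1) := by
    intro x hxB hxV j
    have hxB' : (∑ l ∈ Finset.range N, x (l : Fin N)) = t := hxB
    constructor
    · rintro ⟨⟨hA1, _⟩, _⟩ m h1 h2
      have h3 := hA1 m h1 h2
      rw [hPSrot, Finset.sum_apply] at h3
      exact h3
    · intro hG
      refine ⟨⟨fun m h1 h2 => ?_, by rw [hPSrotN]; exact hxB'⟩, fun m => hxV _⟩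
      rw [hPSrot, Finset.sum_apply]
      exact hG m h1 h2
  -- reduction to the combinatorial cycle lemma
  have hcyc : ∀ (x : Fin N → Fin d → ℤ), x ∈ B → x ∈ V →
      ∃! j' : ℕ, j' < N ∧ ∀ m, 1 ≤ m → m < N →
        (∑ l ∈ Finset.range m, x (((j' + l : ℕ)) : Fin N) i) ≠ -1 := by
    intro x hxB hxV
    have hxB' : (∑ l ∈ Finset.range N, x (l : Fin N)) = t := hxB
    have hper : ∀ m, (fun l : ℕ => x ((l : Fin N)) i) (m + N)
        = (fun l : ℕ => x ((l : Fin N)) i) m := by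
      intro m
      show x (((m + N : ℕ) : Fin N)) i = x ((m : ℕ) : Fin N) i
      rw [Nat.cast_add, Fin.natCast_self, add_zero]
    have hstep : ∀ m, -1 ≤ (fun l : ℕ => x ((l : Fin N)) i) m := fun m => hxV _
    have hsum : (∑ l ∈ Finset.range N, (fun l : ℕ => x ((l : Fin N)) i) l) = -1 := by
      show (∑ l ∈ Finset.range N, x ((l : Fin N)) i) = -1
      rw [← Finset.sum_apply, hxB', hti]
    exact cycle_lemma N hN _ hper hstep hsum
  -- the partition
  have hpart : B ∩ V = ⋃ j : Fin N, R j ⁻¹' (A ∩ V) := by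
    ext x
    constructor
    · rintro ⟨hxB, hxV⟩
      obtain ⟨j', ⟨hj'N, hj'good⟩, _⟩ := hcyc x hxB hxV
      refine Set.mem_iUnion.mpr ⟨⟨j', hj'N⟩, ?_⟩
      rw [Set.mem_preimage, hgood x hxB hxV ⟨j', hj'N⟩]
      exact hj'good
    · intro hx
      obtain ⟨j, hj⟩ := Set.mem_iUnion.mp hx
      rw [Set.mem_preimage] at hj
      obtain ⟨⟨_, hA2⟩, hV'⟩ := hj
      have hxV : x ∈ V := by
        intro m
        have h := hV' (m - j)
        show -1 ≤ x m i
        have : (m - j) + j = m := sub_add_cancel m j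
        rw [show x m = (R j x) (m - j) from by rw [hR]; simp only []; rw [this]]
        exact h
      have hxB : x ∈ B := by
        have h2 : (∑ l ∈ Finset.range N, (R j x) (l : Fin N)) = t := hA2
        rw [hPSrotN] at h2
        exact h2
      exact ⟨hxB, hxV⟩
  -- disjointness
  have hdisj : Pairwise (Function.onFun Disjoint fun j : Fin N => R j ⁻¹' (A ∩ V)) := by
    intro j j' hjj'
    rw [Function.onFun, Set.disjoint_left]
    intro x hx hx'
    rw [Set.mem_preimage] at hx hx'
    have hxV : x ∈ V := by
      intro m
      have h := hx.2 (m - j)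
      show -1 ≤ x m i
      have : (m - j) + j = m := sub_add_cancel m j
      rw [show x m = (R j x) (m - j) from by rw [hR]; simp only []; rw [this]]
      exact h
    have hxB : x ∈ B := by
      have h2 : (∑ l ∈ Finset.range N, (R j x) (l : Fin N)) = t := hx.1.2
      rw [hPSrotN] at h2
      exact h2
    obtain ⟨j₀, _, huniq⟩ := hcyc x hxB hxV
    have h1 : (j : ℕ) = j₀ := huniq _ ⟨j.2, (hgood x hxB hxV j).mp hx⟩
    have h2 : (j' : ℕ) = j₀ := huniq _ ⟨j'.2, (hgood x hxB hxV j').mp hx'⟩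
    exact hjj' (Fin.ext (h1.trans h2.symm))
  -- conclude
  calc (N : ℝ≥0∞) * π A = (N : ℝ≥0∞) * π (A ∩ V) := by rw [hinter]
    _ = ∑ j : Fin N, π (R j ⁻¹' (A ∩ V)) := by
        rw [Finset.sum_congr rfl fun j _ => hRpres j (A ∩ V)]
        rw [Finset.sum_const, Finset.card_univ, Fintype.card_fin, nsmul_eq_mul]
    _ = π (⋃ j : Fin N, R j ⁻¹' (A ∩ V)) := by
        rw [measure_iUnion hdisj fun j => measurableSet_all _, tsum_fintype]
    _ = π (B ∩ V) := by rw [hpart]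
    _ = π B := hinter B

/-- translation: the shifted product measure of `B` equals `convPow` of a singleton. -/
lemma pi_shift_singleton {d : ℕ} (ν : Measure (Fin d → ℤ)) [IsProbabilityMeasure ν] (i : Fin d)
    (N : ℕ) [NeZero N] (k : Fin d → ℤ) :
    (Measure.pi fun _ : Fin N => ν.map (fun z => z - Pi.single i 1))
        {x | (∑ l ∈ Finset.range N, x (l : Fin N)) = k - Pi.single i 1}
      = convPow ν N {k + ((N : ℤ) - 1) • Pi.single i 1} := by
  rw [pi_map_comp, convPow_eq_map_sum,
    Measure.map_apply (measurable_all _) (measurableSet_all _),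
    Measure.map_apply (measurable_all _) (measurableSet_all _)]
  congr 1
  ext x
  simp only [Set.mem_preimage, Set.mem_setOf_eq, Set.mem_singleton_iff]
  have h1 : (∑ l ∈ Finset.range N, (fun m => x m - Pi.single i 1) ((l : Fin N)))
      = (∑ l ∈ Finset.range N, x ((l : Fin N))) - (N : ℤ) • Pi.single i 1 := by
    rw [Finset.sum_sub_distrib, Finset.sum_const, Finset.card_range]
    rw [natCast_zsmul]
  have h2 : (∑ l ∈ Finset.range N, x ((l : Fin N))) = ∑ m : Fin N, x m := by
    rw [← Fin.sum_univ_eq_sum_range (fun l => x (l : Fin N)) N]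
    exact Finset.sum_congr rfl fun m _ => by rw [Fin.cast_val_eq_self]
  rw [h1, h2]
  constructor
  · intro h
    have := sub_eq_iff_eq_add.mp h
    rw [this, sub_smul, one_smul]
    abel
  · intro h
    rw [h, sub_smul, one_smul]
    abel

/-- characterization of `sInf` over an image in `ℕ∞`. -/
lemma sInf_image_eq_iff (T : Set ℕ) (N : ℕ) :
    sInf ((↑) '' T : Set ℕ∞) = ↑N ↔ N ∈ T ∧ ∀ m ∈ T, N ≤ m := by
  classical
  constructor
  · intro h
    have hne : T.Nonempty := by
      by_contra hT
      rw [Set.not_nonempty_iff_eq_empty] at hT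
      rw [hT, Set.image_empty, sInf_empty] at h
      exact (WithTop.natCast_ne_top N) h.symm
    have hfind : ∃ m, m ∈ T := hne
    have hspec := Nat.find_spec hfind
    have heq : sInf ((↑) '' T : Set ℕ∞) = (Nat.find hfind : ℕ∞) := by
      refine le_antisymm (sInf_le ⟨Nat.find hfind, hspec, rfl⟩) (le_sInf ?_)
      rintro b ⟨m, hm, rfl⟩
      exact_mod_cast Nat.find_min' hfind hm
    rw [h] at heq
    have : N = Nat.find hfind := by exact_mod_cast heq
    subst this
    exact ⟨hspec, fun m hm => Nat.find_min' hfind hm⟩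
  · rintro ⟨hm, hmin⟩
    refine le_antisymm (sInf_le ⟨N, hm, rfl⟩) (le_sInf ?_)
    rintro b ⟨m, hmT, rfl⟩
    exact_mod_cast hmin m hmT

end Aux

/-- The law of the stopped walk `S_τ` on `{τ < ∞}`: for every
`k ∈ ℤ₊^d` with `kᵢ = 0`,
`P(τ < ∞, S_τ = k - eᵢ) = ∑_{n ≥ 1} (1/n) νᵢ^{*n}(k + (n-1)eᵢ)`,
i.e. the stopped walk has law `μᵢ` (shifted by `-eᵢ`), where
`μᵢ(k) = ∑_{n≥1} n⁻¹ νᵢ^{*n}(k + (n-1)eᵢ)`. -/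
theorem stmt1
    {d : ℕ} (hd : 1 ≤ d) (i : Fin d)
    {Ω : Type*} [MeasurableSpace Ω] (P : Measure Ω) [IsProbabilityMeasure P]
    (ν : Measure (Fin d → ℤ)) [IsProbabilityMeasure ν]
    (hν : ν {k | ¬ ∀ j, 0 ≤ k j} = 0)
    (ξ : ℕ → Ω → (Fin d → ℤ))
    (hmeas : ∀ n, Measurable (ξ n))
    (hindep : iIndepFun ξ P)
    (hlaw : ∀ n, Measure.map (ξ n) P = Measure.map (fun k => k - Pi.single i 1) ν)
    (S : ℕ → Ω → (Fin d → ℤ))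
    (hS : ∀ n ω, S n ω = ∑ m ∈ Finset.range n, ξ m ω)
    (τ : Ω → ℕ∞)
    (hτ : ∀ ω, τ ω = sInf ((↑) '' {m : ℕ | 1 ≤ m ∧ S m ω i = -1}))
    (k : Fin d → ℤ) (hk : ∀ j, 0 ≤ k j) (hki : k i = 0) :
    P {ω | ∃ n : ℕ, τ ω = (n : ℕ∞) ∧ S n ω = k - Pi.single i 1} =
      ∑' n : ℕ, ((n : ℝ≥0∞) + 1)⁻¹ *
        convPow ν (n + 1) {k + (n : ℤ) • Pi.single i 1} := by
  classical
  set t : Fin d → ℤ := k - Pi.single i 1 with ht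
  have hti : t i = -1 := by
    rw [ht, Pi.sub_apply, Pi.single_eq_same, hki]
    omega
  set νt := ν.map (fun z => z - Pi.single i 1) with hνt
  haveI : IsProbabilityMeasure νt :=
    Measure.isProbabilityMeasure_map (measurable_all _).aemeasurable
  have hbad : νt {z | z i < -1} = 0 := by
    rw [hνt, Measure.map_apply (measurable_all _) (measurableSet_all _)]
    refine le_antisymm (le_trans (measure_mono ?_) hν.le) (zero_le)
    intro z hz
    simp only [Set.mem_preimage, Set.mem_setOf_eq, Pi.sub_apply, Pi.single_eq_same] at hz ⊢
    intro hall
    have := hall i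
    omega
  set E' : ℕ → Set Ω := fun n => {ω | τ ω = (n : ℕ∞) ∧ S n ω = t} with hE'
  have hX : ∀ n : ℕ, Measurable (fun ω (m : Fin (n+1)) => ξ m ω) :=
    fun n => measurable_pi_lambda _ fun m => hmeas m
  have hevent : ∀ n : ℕ, E' (n+1) = (fun ω (m : Fin (n+1)) => ξ m ω) ⁻¹'
      {x : Fin (n+1) → Fin d → ℤ |
        (∀ m, 1 ≤ m → m < (n+1) → (∑ l ∈ Finset.range m, x (l : Fin (n+1))) i ≠ -1) ∧
        (∑ l ∈ Finset.range (n+1), x (l : Fin (n+1))) = t} := by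
    intro n
    ext ω
    have hSeq : ∀ m, m ≤ n+1 →
        S m ω = ∑ l ∈ Finset.range m, ξ ((l : Fin (n+1)) : ℕ) ω := by
      intro m hm
      rw [hS]
      refine Finset.sum_congr rfl fun l hl => ?_
      have hl' : l < n+1 := lt_of_lt_of_le (Finset.mem_range.mp hl) hm
      rw [Fin.val_cast_of_lt hl']
    simp only [hE', Set.mem_setOf_eq, Set.mem_preimage]
    rw [hτ ω, sInf_image_eq_iff]
    constructor
    · rintro ⟨⟨hmem, hmin⟩, hSN⟩
      refine ⟨fun m h1 h2 habs => ?_, by rw [← hSeq (n+1) le_rfl]; exact hSN⟩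
      rw [← hSeq m (le_of_lt h2)] at habs
      have := hmin m ⟨h1, habs⟩
      omega
    · rintro ⟨hfirst, hSN⟩
      have hSN' : S (n+1) ω = t := by rw [hSeq (n+1) le_rfl]; exact hSN
      have hSNi : S (n+1) ω i = -1 := by rw [hSN', hti]
      refine ⟨⟨⟨by omega, hSNi⟩, ?_⟩, hSN'⟩
      rintro m ⟨hm1, hm2⟩
      by_contra habs
      push_neg at habs
      rw [hSeq m (by omega)] at hm2
      exact hfirst m hm1 (by omega) hm2
  have hE0 : E' 0 = ∅ := by
    ext ω
    simp only [hE', Set.mem_setOf_eq, Set.mem_empty_iff_false, iff_false, not_and]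
    intro _ hS0
    have h0 : S 0 ω = 0 := by rw [hS]; simp
    have := congrFun (h0.symm.trans hS0) i
    rw [hti] at this
    simp at this
  have hun : {ω | ∃ n : ℕ, τ ω = (n : ℕ∞) ∧ S n ω = t} = ⋃ n : ℕ, E' (n+1) := by
    ext ω
    simp only [Set.mem_setOf_eq, Set.mem_iUnion]
    constructor
    · rintro ⟨n, hn⟩
      cases n with
      | zero =>
        have : ω ∈ E' 0 := hn
        rw [hE0] at this
        exact this.elim
      | succ n => exact ⟨n, hn⟩
    · rintro ⟨n, hn⟩
      exact ⟨n+1, hn⟩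
  have hEmeas : ∀ n : ℕ, MeasurableSet (E' (n+1)) := by
    intro n
    rw [hevent n]
    exact (hX n) (measurableSet_all _)
  have hdisj : Pairwise (Function.onFun Disjoint fun n : ℕ => E' (n+1)) := by
    intro n m hnm
    rw [Function.onFun, Set.disjoint_left]
    intro ω h1 h2
    have e1 : τ ω = ((n+1 : ℕ) : ℕ∞) := h1.1
    have e2 : τ ω = ((m+1 : ℕ) : ℕ∞) := h2.1
    rw [e1] at e2
    have : n + 1 = m + 1 := by exact_mod_cast e2
    omega
  rw [show {ω | ∃ n : ℕ, τ ω = (n : ℕ∞) ∧ S n ω = t} = ⋃ n : ℕ, E' (n+1) from hun,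
    measure_iUnion hdisj hEmeas]
  refine tsum_congr fun n => ?_
  haveI : NeZero (n+1) := ⟨n.succ_ne_zero⟩
  have hjoint := joint_law P ξ hmeas hindep νt (fun m => by rw [hlaw m, hνt]) (n+1)
  have hP : P (E' (n+1)) = (Measure.pi fun _ : Fin (n+1) => νt)
      {x : Fin (n+1) → Fin d → ℤ |
        (∀ m, 1 ≤ m → m < (n+1) → (∑ l ∈ Finset.range m, x (l : Fin (n+1))) i ≠ -1) ∧
        (∑ l ∈ Finset.range (n+1), x (l : Fin (n+1))) = t} := by
    rw [hevent n, ← Measure.map_apply (hX n) (measurableSet_all _), hjoint]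
  have hMFH := measure_first_hit i νt hbad (n+1) t hti
  have hTrans := pi_shift_singleton ν i (n+1) k
  rw [← hνt] at hTrans
  have hcast : ((n+1 : ℕ) : ℤ) - 1 = (n : ℤ) := by push_cast; ring
  rw [hcast, ← ht] at hTrans
  rw [hP, ← hTrans, ← hMFH, ← mul_assoc]
  have hone : ((n : ℝ≥0∞) + 1)⁻¹ * ((n+1 : ℕ) : ℝ≥0∞) = 1 := by
    have h1 : ((n+1 : ℕ) : ℝ≥0∞) = (n : ℝ≥0∞) + 1 := by push_cast; ring
    rw [h1]
    exact ENNReal.inv_mul_cancel (by simp) (by simp [ENNReal.add_ne_top])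
  rw [hone, one_mul]
end

section
/- Assume M̄ is primitive, and let ρ(A) denote the spectral radius of a matrix A, i.e. the maximum of the moduli of its complex eigenvalues. Then: ρ(M) < 1 if and only if ρ(M̄) < 1; ρ(M) = 1 if and only if ρ(M̄) = 1; and ρ(M) > 1 if and only if ρ(M̄) > 1. (M̄ is subcritical, critical or supercritical exactly when M is.) -/
open Matrix
open scoped ENNReal

/-
Wielandt's proof of Perron's theorem: maximizing `t` over the compact set of pairs `(t, x)` with `x`
in the standard simplex and `t x ≤ A x` yields, for a primitive `A ≥ 0`, an eigenvector `v > 0`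
whose eigenvalue `r ≥ 0` is the spectral radius; and for every `y > 0` one ratio `(A y)_i / y_i`
is at most `r` and one is at least `r`.

If `v` is the Perron vector of `M̄`, then `(M v)_i - v_i = (1 - d_i) (ρ(M̄) - 1) v_i`, so every
ratio `(M v)_i / v_i` lies on the same side of `1` as `ρ(M̄)`. The positive entries of `M` include
those of `M̄`, so `M` is primitive too, and squeezing `ρ(M)` between these ratios shows that
`ρ(M) - 1` has the sign of `ρ(M̄) - 1`.
-/

def IsPrimitiveMat {d : ℕ} (A : Matrix (Fin d) (Fin d) ℝ) : Prop :=
  ∃ n : ℕ, 1 ≤ n ∧ ∀ i j, 0 < (A ^ n) i j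

noncomputable def matSpectralRadius {d : ℕ} (A : Matrix (Fin d) (Fin d) ℝ) : ℝ≥0∞ :=
  spectralRadius ℂ (A.map (algebraMap ℝ ℂ))

open Filter Finset

namespace Matrix

theorem diagonal_apply_nonneg {ι : Type*} [DecidableEq ι] {c : ι → ℝ} (hc : ∀ i, 0 ≤ c i)
    (i j : ι) : 0 ≤ diagonal c i j := by
  rw [diagonal_apply]
  split_ifs
  exacts [hc i, le_rfl]

variable {ι : Type*} [Fintype ι]

theorem pow_apply_pos_of_pos_imp_pos [DecidableEq ι] {A B : Matrix ι ι ℝ} (hA : ∀ i j, 0 ≤ A i j)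
    (hB : ∀ i j, 0 ≤ B i j) (hBA : ∀ i j, 0 < B i j → 0 < A i j) (k : ℕ) (i j : ι)
    (hk : 0 < (B ^ k) i j) : 0 < (A ^ k) i j := by
  induction k generalizing j with
  | zero => simpa using hk
  | succ k ih =>
    rw [pow_succ, mul_apply] at hk ⊢
    obtain ⟨l, -, hl⟩ := (sum_pos_iff_of_nonneg fun l _ =>
      mul_nonneg (pow_apply_nonneg hB k i l) (hB l j)).1 hk
    have hBl : 0 < B l j := pos_of_mul_pos_right hl (pow_apply_nonneg hB k i l)
    have hBkl : 0 < (B ^ k) i l := pos_of_mul_pos_left hl (hB l j)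
    exact sum_pos' (fun l _ => mul_nonneg (pow_apply_nonneg hA k i l) (hA l j))
      ⟨l, mem_univ l, mul_pos (ih l hBkl) (hBA l j hBl)⟩

theorem mulVec_apply_le_mulVec_apply {A : Matrix ι ι ℝ} (hA : ∀ i j, 0 ≤ A i j)
    {x y : ι → ℝ} (hxy : ∀ j, x j ≤ y j) (i : ι) : (A *ᵥ x) i ≤ (A *ᵥ y) i :=
  sum_le_sum fun j _ => mul_le_mul_of_nonneg_left (hxy j) (hA i j)

theorem mulVec_apply_pos {A : Matrix ι ι ℝ} (hA : ∀ i j, 0 < A i j) {x : ι → ℝ}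
    (hx : ∀ j, 0 ≤ x j) (hx0 : x ≠ 0) (i : ι) : 0 < (A *ᵥ x) i := by
  obtain ⟨j, hj⟩ := Function.ne_iff.1 hx0
  exact sum_pos' (fun l _ => mul_nonneg (hA i l).le (hx l))
    ⟨j, mem_univ j, mul_pos (hA i j) ((hx j).lt_of_ne' hj)⟩

theorem exists_mulVec_mul_le {A : Matrix ι ι ℝ} (hA : ∀ i j, 0 ≤ A i j) {x y : ι → ℝ}
    (hx : ∃ j, 0 < x j) (hy : ∀ i, 0 < y i) :
    ∃ i, 0 < x i ∧ (A *ᵥ x) i * y i ≤ (A *ᵥ y) i * x i := by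
  obtain ⟨j, hj⟩ := hx
  have : Nonempty ι := ⟨j⟩
  obtain ⟨i, hi⟩ := Finite.exists_max fun i => x i / y i
  have hle : (A *ᵥ x) i ≤ x i / y i * (A *ᵥ y) i := by
    rw [← smul_eq_mul, ← Pi.smul_apply, ← mulVec_smul]
    exact mulVec_apply_le_mulVec_apply hA (fun l => (div_le_iff₀ (hy l)).1 (hi l)) i
  refine ⟨i, (div_pos_iff_of_pos_right (hy i)).1 ((div_pos hj (hy j)).trans_le (hi j)), ?_⟩
  calc (A *ᵥ x) i * y i ≤ x i / y i * (A *ᵥ y) i * y i :=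
        mul_le_mul_of_nonneg_right hle (hy i).le
    _ = (A *ᵥ y) i * x i := by field_simp [(hy i).ne']

theorem exists_mulVec_le_of_mulVec_eq [Nonempty ι] {A : Matrix ι ι ℝ} (hA : ∀ i j, 0 ≤ A i j)
    {r : ℝ} {v y : ι → ℝ} (hv : ∀ i, 0 < v i) (hAv : A *ᵥ v = r • v) (hy : ∀ i, 0 < y i) :
    ∃ i, (A *ᵥ y) i ≤ r * y i := by
  obtain ⟨i, -, hi⟩ := exists_mulVec_mul_le hA ⟨Classical.arbitrary ι, hy _⟩ hv
  refine ⟨i, le_of_mul_le_mul_right ?_ (hv i)⟩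
  simpa [hAv, mul_right_comm] using hi

theorem exists_le_mulVec_of_mulVec_eq [Nonempty ι] {A : Matrix ι ι ℝ} (hA : ∀ i j, 0 ≤ A i j)
    {r : ℝ} {v y : ι → ℝ} (hv : ∀ i, 0 < v i) (hAv : A *ᵥ v = r • v) (hy : ∀ i, 0 < y i) :
    ∃ i, r * y i ≤ (A *ᵥ y) i := by
  obtain ⟨i, -, hi⟩ := exists_mulVec_mul_le hA ⟨Classical.arbitrary ι, hv _⟩ hy
  refine ⟨i, le_of_mul_le_mul_right ?_ (hv i)⟩
  simpa [hAv, mul_right_comm] using hi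

theorem mem_spectrum_iff_exists_mulVec_eq_smul {K : Type*} [Field K] [DecidableEq ι]
    {B : Matrix ι ι K} {μ : K} : μ ∈ spectrum K B ↔ ∃ w ≠ 0, B *ᵥ w = μ • w := by
  rw [← spectrum_toLin', ← Module.End.hasEigenvalue_iff_mem_spectrum]
  constructor
  · intro h
    obtain ⟨w, hw⟩ := h.exists_hasEigenvector
    exact ⟨w, hw.2, by simpa using hw.apply_eq_smul⟩
  · rintro ⟨w, hw0, hw⟩
    exact Module.End.hasEigenvalue_of_hasEigenvector
      ⟨Module.End.mem_eigenspace_iff.2 (by simpa using hw), hw0⟩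

theorem norm_le_of_mem_spectrum_map [DecidableEq ι] {A : Matrix ι ι ℝ} (hA : ∀ i j, 0 ≤ A i j)
    {v : ι → ℝ} (hv : ∀ i, 0 < v i) {c : ℝ} (hc : ∀ i, (A *ᵥ v) i ≤ c * v i) {μ : ℂ}
    (hμ : μ ∈ spectrum ℂ (A.map (algebraMap ℝ ℂ))) : ‖μ‖ ≤ c := by
  obtain ⟨w, hw0, hw⟩ := mem_spectrum_iff_exists_mulVec_eq_smul.1 hμ
  obtain ⟨j, hj⟩ := Function.ne_iff.1 hw0
  have hμw : ∀ i, ‖μ‖ * ‖w i‖ ≤ (A *ᵥ fun j => ‖w j‖) i := fun i =>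
    calc ‖μ‖ * ‖w i‖ = ‖∑ j, (A i j : ℂ) * w j‖ := by
          rw [← norm_mul, ← smul_eq_mul, ← Pi.smul_apply, ← hw]; rfl
      _ ≤ ∑ j, A i j * ‖w j‖ := (norm_sum_le _ _).trans_eq <| sum_congr rfl fun j _ => by
          rw [norm_mul, Complex.norm_real, Real.norm_of_nonneg (hA i j)]
  obtain ⟨i, hwi, hi⟩ := exists_mulVec_mul_le hA (x := fun j => ‖w j‖) ⟨j, norm_pos_iff.2 hj⟩ hv
  refine le_of_mul_le_mul_right (a := ‖w i‖ * v i) ?_ (mul_pos hwi (hv i))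
  calc ‖μ‖ * (‖w i‖ * v i) ≤ (A *ᵥ fun j => ‖w j‖) i * v i := by
        rw [← mul_assoc]; exact mul_le_mul_of_nonneg_right (hμw i) (hv i).le
    _ ≤ (A *ᵥ v) i * ‖w i‖ := hi
    _ ≤ c * v i * ‖w i‖ := mul_le_mul_of_nonneg_right (hc i) hwi.le
    _ = c * (‖w i‖ * v i) := by ring

theorem spectralRadius_map_eq_ofReal [DecidableEq ι] [Nonempty ι] {A : Matrix ι ι ℝ}
    (hA : ∀ i j, 0 ≤ A i j) {r : ℝ} (hr : 0 ≤ r) {v : ι → ℝ} (hv : ∀ i, 0 < v i)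
    (hAv : A *ᵥ v = r • v) : spectralRadius ℂ (A.map (algebraMap ℝ ℂ)) = ENNReal.ofReal r := by
  refine le_antisymm (iSup₂_le fun μ hμ => ?_) ?_
  · exact (ofReal_norm μ).symm.trans_le <| ENNReal.ofReal_le_ofReal <|
      norm_le_of_mem_spectrum_map hA hv (fun i => by simp [hAv]) hμ
  · have hmem : (r : ℂ) ∈ spectrum ℂ (A.map (algebraMap ℝ ℂ)) := by
      refine mem_spectrum_iff_exists_mulVec_eq_smul.2 ⟨fun i => (v i : ℂ), ?_, ?_⟩
      · exact Function.ne_iff.2 ⟨Classical.arbitrary ι, by simpa using (hv _).ne'⟩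
      · ext i
        simpa [hAv, Function.comp_def] using (RingHom.map_mulVec (algebraMap ℝ ℂ) A v i).symm
    calc ENNReal.ofReal r = ‖(r : ℂ)‖₊ := by
          rw [Complex.nnnorm_real, Real.nnnorm_of_nonneg hr, ENNReal.ofReal_eq_coe_nnreal]
      _ ≤ spectralRadius ℂ (A.map (algebraMap ℝ ℂ)) :=
          le_iSup₂ (f := fun μ _ => (‖μ‖₊ : ℝ≥0∞)) _ hmem

/-- The hypograph of the Collatz–Wielandt function `x ↦ min_i (A x)_i / x_i` over the standard
simplex; the largest `t` it contains is the Perron root. -/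
def collatzWielandtSet (A : Matrix ι ι ℝ) : Set (ℝ × (ι → ℝ)) :=
  {p | 0 ≤ p.1 ∧ p.2 ∈ stdSimplex ℝ ι ∧ ∀ i, p.1 * p.2 i ≤ (A *ᵥ p.2) i}

theorem fst_le_sum_of_mem_collatzWielandtSet {A : Matrix ι ι ℝ} (hA : ∀ i j, 0 ≤ A i j)
    {p : ℝ × (ι → ℝ)} (hp : p ∈ collatzWielandtSet A) : p.1 ≤ ∑ i, ∑ j, A i j := by
  obtain ⟨-, ⟨hx0, hx1⟩, hle⟩ := hp
  have hx_le_one : ∀ j, p.2 j ≤ 1 := fun j => hx1 ▸ single_le_sum (fun l _ => hx0 l) (mem_univ j)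
  calc p.1 = ∑ i, p.1 * p.2 i := by rw [← mul_sum, hx1, mul_one]
    _ ≤ ∑ i, (A *ᵥ p.2) i := sum_le_sum fun i _ => hle i
    _ ≤ ∑ i, ∑ j, A i j := sum_le_sum fun i _ => sum_le_sum fun j _ =>
        mul_le_of_le_one_right (hA i j) (hx_le_one j)

theorem isCompact_collatzWielandtSet {A : Matrix ι ι ℝ} (hA : ∀ i j, 0 ≤ A i j) :
    IsCompact (collatzWielandtSet A) := by
  refine (isCompact_Icc.prod (isCompact_stdSimplex ℝ ι)).of_isClosed_subset ?_
    fun p hp => ⟨⟨hp.1, fst_le_sum_of_mem_collatzWielandtSet hA hp⟩, hp.2.1⟩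
  refine (isClosed_le continuous_const continuous_fst).inter
    (((isClosed_stdSimplex ℝ ι).preimage continuous_snd).inter ?_)
  show IsClosed {p : ℝ × (ι → ℝ) | ∀ i, p.1 * p.2 i ≤ (A *ᵥ p.2) i}
  rw [Set.ofPred_forall]
  exact isClosed_iInter fun i => isClosed_le (by fun_prop) (by fun_prop)

theorem mem_collatzWielandtSet_of_pos {A : Matrix ι ι ℝ} {t : ℝ} (ht : 0 ≤ t) {w : ι → ℝ}
    (hw : ∀ i, 0 ≤ w i) (hsum : 0 < ∑ i, w i) (htw : ∀ i, t * w i ≤ (A *ᵥ w) i) :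
    (t, (∑ i, w i)⁻¹ • w) ∈ collatzWielandtSet A := by
  have hc : 0 ≤ (∑ i, w i)⁻¹ := inv_nonneg.2 hsum.le
  refine ⟨ht, ⟨fun i => mul_nonneg hc (hw i), ?_⟩, fun i => ?_⟩
  · simp [← mul_sum, hsum.ne']
  · simpa [mulVec_smul, mul_left_comm t] using mul_le_mul_of_nonneg_left (htw i) hc

theorem exists_lt_fst_mem_collatzWielandtSet [DecidableEq ι] {A : Matrix ι ι ℝ} {k : ℕ}
    (hk : ∀ i j, 0 < (A ^ k) i j) {p : ℝ × (ι → ℝ)} (hp : p ∈ collatzWielandtSet A)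
    (hne : A *ᵥ p.2 ≠ p.1 • p.2) :
    ∃ q ∈ collatzWielandtSet A, p.1 < q.1 := by
  obtain ⟨r, x⟩ := p
  obtain ⟨hr, hx, hrx⟩ := hp
  have hx0 : x ≠ 0 := fun h => by simpa [h] using hx.2
  have : Nonempty ι := ⟨(Function.ne_iff.1 hx0).choose⟩
  set w := (A ^ k) *ᵥ x
  have hw : ∀ i, 0 < w i := mulVec_apply_pos hk hx.1 hx0
  -- `A ^ k` turns the nonzero gap `A x - r x ≥ 0` into a strictly positive one at `w`.
  have hgap : ∀ i, r * w i < (A *ᵥ w) i := by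
    intro i
    have := mulVec_apply_pos hk (x := A *ᵥ x - r • x) (fun j => by simpa using hrx j)
      (sub_ne_zero.2 hne) i
    rwa [mulVec_sub, mulVec_smul, mulVec_mulVec, ← pow_succ, pow_succ', ← mulVec_mulVec,
      Pi.sub_apply, Pi.smul_apply, smul_eq_mul, sub_pos] at this
  obtain ⟨t, hrt, ht⟩ : ∃ t, r < t ∧ ∀ i, t * w i < (A *ᵥ w) i :=
    (eventually_all.2 fun i => (continuousAt_id.mul continuousAt_const).eventually_lt
      continuousAt_const (hgap i)).exists_gt
  exact ⟨_, mem_collatzWielandtSet_of_pos (hr.trans hrt.le) (fun i => (hw i).le)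
    (sum_pos (fun i _ => hw i) univ_nonempty) (fun i => (ht i).le), hrt⟩

theorem mulVec_eq_pow_smul_of_mulVec_eq [DecidableEq ι] {A : Matrix ι ι ℝ} {r : ℝ} {x : ι → ℝ}
    (hAx : A *ᵥ x = r • x) (k : ℕ) : (A ^ k) *ᵥ x = r ^ k • x := by
  induction k with
  | zero => simp
  | succ k ih => rw [pow_succ', ← mulVec_mulVec, ih, mulVec_smul, hAx, smul_smul, pow_succ]

theorem exists_pos_mulVec_eq_smul [DecidableEq ι] [Nonempty ι] {A : Matrix ι ι ℝ}
    (hA : ∀ i j, 0 ≤ A i j) {k : ℕ} (hk : ∀ i j, 0 < (A ^ k) i j) :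
    ∃ r : ℝ, 0 ≤ r ∧ ∃ v : ι → ℝ, (∀ i, 0 < v i) ∧ A *ᵥ v = r • v := by
  obtain ⟨i₀⟩ := ‹Nonempty ι›
  have hnonempty : (collatzWielandtSet A).Nonempty :=
    ⟨(0, Pi.single i₀ 1), le_rfl, single_mem_stdSimplex ℝ i₀, fun i => by simpa using hA i i₀⟩
  obtain ⟨⟨r, x⟩, hp, hmax⟩ :=
    (isCompact_collatzWielandtSet hA).exists_isMaxOn hnonempty continuous_fst.continuousOn
  have hAx : A *ᵥ x = r • x := by
    by_contra hne
    obtain ⟨q, hq, hlt⟩ := exists_lt_fst_mem_collatzWielandtSet hk hp hne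
    exact (isMaxOn_iff.1 hmax q hq).not_gt hlt
  refine ⟨r, hp.1, x, fun i => ?_, hAx⟩
  have hx0 : x ≠ 0 := fun h => by simpa [h] using hp.2.1.2
  have := mulVec_apply_pos hk hp.2.1.1 hx0 i
  rw [mulVec_eq_pow_smul_of_mulVec_eq hAx, Pi.smul_apply, smul_eq_mul] at this
  exact pos_of_mul_pos_right this (pow_nonneg hp.1 k)

section MutationMean

variable [DecidableEq ι] {B : Matrix ι ι ℝ} {c : ι → ℝ}

theorem one_sub_diagonal_mul_add_diagonal_apply (i j : ι) :
    ((1 - diagonal c) * B + diagonal c) i j = (1 - c i) * B i j + diagonal c i j := by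
  simp [sub_mul, diagonal_mul]

theorem one_sub_diagonal_mul_add_diagonal_nonneg (hB : ∀ i j, 0 ≤ B i j) (hc₀ : ∀ i, 0 ≤ c i)
    (hc₁ : ∀ i, c i ≤ 1) (i j : ι) : 0 ≤ ((1 - diagonal c) * B + diagonal c) i j := by
  rw [one_sub_diagonal_mul_add_diagonal_apply]
  exact add_nonneg (mul_nonneg (sub_nonneg.2 (hc₁ i)) (hB i j)) (diagonal_apply_nonneg hc₀ i j)

theorem one_sub_diagonal_mul_add_diagonal_pos (hc₀ : ∀ i, 0 ≤ c i) (hc₁ : ∀ i, c i < 1)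
    {i j : ι} (hBij : 0 < B i j) : 0 < ((1 - diagonal c) * B + diagonal c) i j := by
  rw [one_sub_diagonal_mul_add_diagonal_apply]
  exact add_pos_of_pos_of_nonneg (mul_pos (sub_pos.2 (hc₁ i)) hBij) (diagonal_apply_nonneg hc₀ i j)

theorem one_sub_diagonal_mul_add_diagonal_mulVec_apply {r : ℝ} {v : ι → ℝ}
    (hBv : B *ᵥ v = r • v) (i : ι) :
    (((1 - diagonal c) * B + diagonal c) *ᵥ v) i = (1 + (1 - c i) * (r - 1)) * v i := by
  rw [add_mulVec, ← mulVec_mulVec, hBv]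
  simp only [sub_mulVec, one_mulVec, Pi.add_apply, Pi.sub_apply, Pi.smul_apply, smul_eq_mul,
    mulVec_diagonal]
  ring

end MutationMean

end Matrix

theorem cmp_eq_of_le_mul_of_mul_le {x y a b : ℝ} (ha : 0 < a) (hb : 0 < b) (h₁ : x ≤ a * y)
    (h₂ : b * y ≤ x) : cmp x 0 = cmp y 0 := by
  rcases lt_trichotomy y 0 with hy | rfl | hy
  · rw [(cmp_eq_lt_iff _ _).2 hy, cmp_eq_lt_iff]; nlinarith
  · rw [cmp_self_eq_eq, cmp_eq_eq_iff]; linarith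
  · rw [(cmp_eq_gt_iff _ _).2 hy, cmp_eq_gt_iff]; nlinarith

theorem stmt13_general
    {d : ℕ}
    (Mbar : Matrix (Fin d) (Fin d) ℝ)
    (hMbar : ∀ i j, 0 ≤ Mbar i j)
    (dv : Fin d → ℝ) (hdv : ∀ i, 0 ≤ dv i ∧ dv i < 1)
    (M : Matrix (Fin d) (Fin d) ℝ)
    (hM : M = (1 - Matrix.diagonal dv) * Mbar + Matrix.diagonal dv)
    (hprim : IsPrimitiveMat Mbar) :
    (matSpectralRadius M < 1 ↔ matSpectralRadius Mbar < 1) ∧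
      (matSpectralRadius M = 1 ↔ matSpectralRadius Mbar = 1) ∧
      (1 < matSpectralRadius M ↔ 1 < matSpectralRadius Mbar) := by
  rcases isEmpty_or_nonempty (Fin d) with _ | _
  · simp [Subsingleton.elim M Mbar]
  have hd₀ : ∀ i, 0 ≤ dv i := fun i => (hdv i).1
  have hd₁ : ∀ i, dv i < 1 := fun i => (hdv i).2
  have hMnn : ∀ i j, 0 ≤ M i j :=
    hM ▸ one_sub_diagonal_mul_add_diagonal_nonneg hMbar hd₀ fun i => (hd₁ i).le
  obtain ⟨k, -, hk⟩ := hprim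
  have hMk : ∀ i j, 0 < (M ^ k) i j := fun i j =>
    pow_apply_pos_of_pos_imp_pos hMnn hMbar
      (fun _ _ h => hM ▸ one_sub_diagonal_mul_add_diagonal_pos hd₀ hd₁ h) k i j (hk i j)
  obtain ⟨rb, hrb, v, hv, hMbarv⟩ := exists_pos_mulVec_eq_smul hMbar hk
  obtain ⟨rm, hrm, w, hw, hMw⟩ := exists_pos_mulVec_eq_smul hMnn hMk
  obtain ⟨i, hi⟩ := exists_le_mulVec_of_mulVec_eq hMnn hw hMw hv
  obtain ⟨j, hj⟩ := exists_mulVec_le_of_mulVec_eq hMnn hw hMw hv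
  rw [hM, one_sub_diagonal_mul_add_diagonal_mulVec_apply hMbarv] at hi hj
  have hcmp : cmp rm 1 = cmp rb 1 := by
    rw [← cmp_sub_zero, ← cmp_sub_zero rb]
    refine cmp_eq_of_le_mul_of_mul_le (sub_pos.2 (hd₁ i)) (sub_pos.2 (hd₁ j)) ?_ ?_
    · linarith [le_of_mul_le_mul_right hi (hv i)]
    · linarith [le_of_mul_le_mul_right hj (hv j)]
  rw [matSpectralRadius, matSpectralRadius, spectralRadius_map_eq_ofReal hMnn hrm hw hMw,
    spectralRadius_map_eq_ofReal hMbar hrb hv hMbarv, ENNReal.ofReal_lt_one,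
    ENNReal.ofReal_lt_one, ENNReal.ofReal_eq_one, ENNReal.ofReal_eq_one, ENNReal.one_lt_ofReal,
    ENNReal.one_lt_ofReal]
  exact ⟨lt_iff_lt_of_cmp_eq_cmp hcmp, eq_iff_eq_of_cmp_eq_cmp hcmp,
    lt_iff_lt_of_cmp_eq_cmp (cmp_eq_cmp_symm.1 hcmp)⟩

/-- Let `M̄` be nonnegative with zero diagonal, `d_i ∈ [0,1)`,
`D = diag(d_1, …, d_d)` and `M = (I - D) M̄ + D`. Assume `M̄` is primitive. Then
`ρ(M) < 1 ↔ ρ(M̄) < 1`, `ρ(M) = 1 ↔ ρ(M̄) = 1` and `ρ(M) > 1 ↔ ρ(M̄) > 1`. -/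
theorem stmt13
    {d : ℕ} (hd : 2 ≤ d)
    (Mbar : Matrix (Fin d) (Fin d) ℝ)
    (hMbar : ∀ i j, 0 ≤ Mbar i j) (hdiag : ∀ i, Mbar i i = 0)
    (dv : Fin d → ℝ) (hdv : ∀ i, 0 ≤ dv i ∧ dv i < 1)
    (M : Matrix (Fin d) (Fin d) ℝ)
    (hM : M = (1 - Matrix.diagonal dv) * Mbar + Matrix.diagonal dv)
    (hprim : IsPrimitiveMat Mbar) :
    (matSpectralRadius M < 1 ↔ matSpectralRadius Mbar < 1) ∧
      (matSpectralRadius M = 1 ↔ matSpectralRadius Mbar = 1) ∧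
      (1 < matSpectralRadius M ↔ 1 < matSpectralRadius Mbar) :=
  stmt13_general Mbar hMbar dv hdv M hM hprim
end
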